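/- arXiv:1709.03893 — 2 statements merged into one kernel-verified Lean document; each statement's English description precedes it below -/
import Mathlib

section
/- Let H be a separable complex Hilbert space and let x : ℤ → H be a Riesz basis for H. Then there exist constants 0 < A ≤ B such that for every f ∈ H, A·‖f‖² ≤ ∑_{n∈ℤ} ( |⟨f, x_{2n}⟩|² + |⟨f, x_{2n+1} − x_{2n}⟩|² ) ≤ B·‖f‖². -/
noncomputable section
open scoped Classical

local notation "⟪" f ", " g "⟫" => @inner ℂ _ _ g f

/-- A family `x : ι → H` is a Riesz basis for `H` if it is the image of a Hilbert
(orthonormal) basis of `H` under a continuous linear equivalence of `H`. -/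
def IsRieszBasis {H : Type*} [NormedAddCommGroup H] [InnerProductSpace ℂ H]
    {ι : Type*} (x : ι → H) : Prop :=
  ∃ (e : HilbertBasis ι ℂ H) (T : H ≃L[ℂ] H), ∀ i, x i = T (e i)

/-- Families `x, y : ι → H` form a pair of dual Riesz bases: both are Riesz bases,
they are biorthogonal, and `∑ᵢ ⟨f, yᵢ⟩ xᵢ = f` for every `f` (inner product linear in
the first argument, conjugate-linear in the second). -/
def IsDualRieszBasisPair {H : Type*} [NormedAddCommGroup H] [InnerProductSpace ℂ H]
    {ι : Type*} (x y : ι → H) : Prop :=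
  IsRieszBasis x ∧ IsRieszBasis y ∧
    (∀ i j, ⟪x i, y j⟫ = if i = j then (1 : ℂ) else 0) ∧
    ∀ f : H, HasSum (fun i => ⟪f, y i⟫ • x i) f

/-! Writing `x i = T (e i)`, we get `⟪f, x i⟫ = ⟪T† f, e i⟫`, so by Parseval
`∑ |⟪f, x i⟫|² = ‖T† f‖²`, which is comparable to `‖f‖²` because `T†` is invertible.
Grouping the indices into pairs `(2n, 2n+1)`, the map `(p, q) ↦ (p, q - p)` and its inverse
`(p, r) ↦ (p, r + p)` change `|p|² + |q|²` by at most a factor `3`. -/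

theorem HasSum.int_even_add_odd {M : Type*} [AddCommMonoid M] [TopologicalSpace M]
    [ContinuousAdd M] [RegularSpace M] {f : ℤ → M} {a : M} (h : HasSum f a) :
    HasSum (fun n => f (2 * n) + f (2 * n + 1)) a := by
  -- `Int.divModEquiv 2` identifies `ℤ` with `ℤ × Fin 2` through `(n, k) ↦ n * 2 + k`.
  refine ((Int.divModEquiv 2).symm.hasSum_iff.mpr h).prod_fiberwise fun n => ?_
  simpa [Fin.sum_univ_two, mul_comm] using
    hasSum_fintype fun k : Fin 2 => f ((Int.divModEquiv 2).symm (n, k))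

theorem norm_sub_sq_le {E : Type*} [SeminormedAddCommGroup E] (a b : E) :
    ‖a - b‖ ^ 2 ≤ 2 * (‖a‖ ^ 2 + ‖b‖ ^ 2) :=
  (pow_le_pow_left₀ (norm_nonneg _) (norm_sub_le a b) 2).trans add_sq_le

theorem norm_sq_add_norm_sub_sq_le {E : Type*} [SeminormedAddCommGroup E] (a b : E) :
    ‖a‖ ^ 2 + ‖b - a‖ ^ 2 ≤ 3 * (‖a‖ ^ 2 + ‖b‖ ^ 2) := by
  linarith [norm_sub_sq_le b a, sq_nonneg ‖b‖]

theorem norm_sq_add_norm_sq_le {E : Type*} [SeminormedAddCommGroup E] (a b : E) :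
    ‖a‖ ^ 2 + ‖b‖ ^ 2 ≤ 3 * (‖a‖ ^ 2 + ‖b - a‖ ^ 2) := by
  have h := norm_sub_sq_le (b - a) (-a)
  rw [sub_neg_eq_add, sub_add_cancel, norm_neg] at h
  linarith [sq_nonneg ‖b - a‖]

theorem HasSum.summable_and_tsum_comparable {ι : Type*} {u w : ι → ℝ} {s C : ℝ}
    (hu : ∀ i, 0 ≤ u i) (huw : ∀ i, u i ≤ C * w i) (hwu : ∀ i, w i ≤ C * u i)
    (hw : HasSum w s) :
    Summable u ∧ s ≤ C * ∑' i, u i ∧ ∑' i, u i ≤ C * s := by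
  have hCw : HasSum (fun i => C * w i) (C * s) := hw.mul_left C
  have hsum : Summable u := .of_nonneg_of_le hu huw hCw.summable
  exact ⟨hsum, hasSum_le hwu hw (hsum.hasSum.mul_left C), hasSum_le huw hsum.hasSum hCw⟩

theorem HilbertBasis.hasSum_norm_inner_sq {𝕜 E ι : Type*} [RCLike 𝕜] [NormedAddCommGroup E]
    [InnerProductSpace 𝕜 E] (b : HilbertBasis ι 𝕜 E) (v : E) :
    HasSum (fun i => ‖inner 𝕜 (b i) v‖ ^ 2) (‖v‖ ^ 2) := by
  simpa [b.repr_apply_apply] using lp.hasSum_norm (p := 2) (by norm_num) (b.repr v)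

theorem ContinuousLinearEquiv.exists_norm_bounds {𝕜 E F : Type*} [NontriviallyNormedField 𝕜]
    [SeminormedAddCommGroup E] [SeminormedAddCommGroup F] [NormedSpace 𝕜 E] [NormedSpace 𝕜 F]
    (L : E ≃L[𝕜] F) :
    ∃ a b : ℝ, 0 < a ∧ a ≤ b ∧ ∀ v, a * ‖v‖ ≤ ‖L v‖ ∧ ‖L v‖ ≤ b * ‖v‖ := by
  -- The `+ 1`s keep both constants positive even when `E` is trivial.
  set K := ‖(L.symm : F →L[𝕜] E)‖
  refine ⟨(K + 1)⁻¹, ‖(L : E →L[𝕜] F)‖ + 1, by positivity, ?_, fun v => ⟨?_, ?_⟩⟩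
  · calc (K + 1)⁻¹ ≤ 1 := inv_le_one_of_one_le₀ (by simp [K])
      _ ≤ _ := by simp
  · rw [inv_mul_le_iff₀ (by positivity)]
    calc ‖v‖ = ‖L.symm (L v)‖ := by simp
      _ ≤ K * ‖L v‖ := (L.symm : F →L[𝕜] E).le_opNorm _
      _ ≤ (K + 1) * ‖L v‖ := by gcongr; simp
  · calc ‖L v‖ ≤ ‖(L : E →L[𝕜] F)‖ * ‖v‖ := (L : E →L[𝕜] F).le_opNorm _
      _ ≤ _ := by gcongr; simp

namespace ContinuousLinearEquiv

variable {𝕜 E F : Type*} [RCLike 𝕜] [NormedAddCommGroup E] [NormedAddCommGroup F]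
  [InnerProductSpace 𝕜 E] [InnerProductSpace 𝕜 F] [CompleteSpace E] [CompleteSpace F]

def adjoint (L : E ≃L[𝕜] F) : F ≃L[𝕜] E :=
  equivOfInverse (L : E →L[𝕜] F).adjoint (L.symm : F →L[𝕜] E).adjoint
    (fun v => ext_inner_left 𝕜 fun w => by
      simp [ContinuousLinearMap.adjoint_inner_right])
    (fun v => ext_inner_left 𝕜 fun w => by
      simp [ContinuousLinearMap.adjoint_inner_right])

theorem inner_adjoint_right (L : E ≃L[𝕜] F) (v : E) (w : F) :
    inner 𝕜 v (L.adjoint w) = inner 𝕜 (L v) w :=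
  (L : E →L[𝕜] F).adjoint_inner_right v w

end ContinuousLinearEquiv

theorem IsRieszBasis.exists_frame_bounds {H ι : Type*} [NormedAddCommGroup H]
    [InnerProductSpace ℂ H] {x : ι → H} (hx : IsRieszBasis x) :
    ∃ A B : ℝ, 0 < A ∧ A ≤ B ∧ ∀ f : H, ∃ s, HasSum (fun i => ‖⟪f, x i⟫‖ ^ 2) s ∧
      A * ‖f‖ ^ 2 ≤ s ∧ s ≤ B * ‖f‖ ^ 2 := by
  obtain ⟨e, T, hxT⟩ := hx
  have : CompleteSpace H := e.repr.toIsometryEquiv.completeSpace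
  obtain ⟨a, b, ha, hab, hT⟩ := T.adjoint.exists_norm_bounds
  refine ⟨a ^ 2, b ^ 2, by positivity, by gcongr, fun f => ⟨‖T.adjoint f‖ ^ 2, ?_, ?_, ?_⟩⟩
  · simpa only [hxT, T.inner_adjoint_right] using e.hasSum_norm_inner_sq (T.adjoint f)
  · rw [← mul_pow]; gcongr; exact (hT f).1
  · rw [← mul_pow]; gcongr; exact (hT f).2

theorem stmt10_general {H : Type*} [NormedAddCommGroup H] [InnerProductSpace ℂ H]
    (x : ℤ → H) (hx : IsRieszBasis x) :
    ∃ A B : ℝ, 0 < A ∧ A ≤ B ∧ ∀ f : H,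
      Summable (fun n : ℤ => ‖⟪f, x (2 * n)⟫‖ ^ 2 + ‖⟪f, x (2 * n + 1) - x (2 * n)⟫‖ ^ 2) ∧
      A * ‖f‖ ^ 2 ≤
        ∑' n : ℤ, (‖⟪f, x (2 * n)⟫‖ ^ 2 + ‖⟪f, x (2 * n + 1) - x (2 * n)⟫‖ ^ 2) ∧
      ∑' n : ℤ, (‖⟪f, x (2 * n)⟫‖ ^ 2 + ‖⟪f, x (2 * n + 1) - x (2 * n)⟫‖ ^ 2) ≤
        B * ‖f‖ ^ 2 := by
  obtain ⟨A, B, hA, hAB, hframe⟩ := hx.exists_frame_bounds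
  refine ⟨A / 3, 3 * B, by positivity, by linarith, fun f => ?_⟩
  obtain ⟨s, hs, hAs, hsB⟩ := hframe f
  obtain ⟨hsum, hlow, hup⟩ := hs.int_even_add_odd.summable_and_tsum_comparable
    (u := fun n => ‖⟪f, x (2 * n)⟫‖ ^ 2 + ‖⟪f, x (2 * n + 1) - x (2 * n)⟫‖ ^ 2)
    (fun n => by positivity)
    (fun n => by simpa only [inner_sub_left] using norm_sq_add_norm_sub_sq_le _ _)
    (fun n => by simpa only [inner_sub_left] using norm_sq_add_norm_sq_le _ _)
  exact ⟨hsum, by linarith, by linarith⟩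

theorem stmt10 {H : Type*} [NormedAddCommGroup H] [InnerProductSpace ℂ H]
    [CompleteSpace H] [TopologicalSpace.SeparableSpace H]
    (x : ℤ → H) (hx : IsRieszBasis x) :
    ∃ A B : ℝ, 0 < A ∧ A ≤ B ∧ ∀ f : H,
      Summable (fun n : ℤ => ‖⟪f, x (2 * n)⟫‖ ^ 2 + ‖⟪f, x (2 * n + 1) - x (2 * n)⟫‖ ^ 2) ∧
      A * ‖f‖ ^ 2 ≤
        ∑' n : ℤ, (‖⟪f, x (2 * n)⟫‖ ^ 2 + ‖⟪f, x (2 * n + 1) - x (2 * n)⟫‖ ^ 2) ∧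
      ∑' n : ℤ, (‖⟪f, x (2 * n)⟫‖ ^ 2 + ‖⟪f, x (2 * n + 1) - x (2 * n)⟫‖ ^ 2) ≤
        B * ‖f‖ ^ 2 :=
  stmt10_general x hx
end
end

section
/- Let H be a separable complex Hilbert space, let p ≥ 1, and let x, y : ℤ → H form a pair of dual Riesz bases for H. For k ∈ Fin p and n ∈ ℤ define the backward-difference vectors z_{(k,n)} = ∑_{j=0}^{k} (−1)^{j} C(k,j) x_{pn−j} and the vectors w_{(k,n)} = (−1)^{k} ∑_{j=k}^{p−1} C(j,k) y_{pn−j}, where C(·,·) is the binomial coefficient. Then z : Fin p × ℤ → H is a Riesz basis for H with dual Riesz basis w; in particular, for every F ∈ H the family ((k,n) ↦ ⟨F, z_{(k,n)}⟩ w_{(k,n)}) has sum F (unconditional convergence in H). -/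
noncomputable section
open scoped Classical

local notation "⟪" f ", " g "⟫" => @inner ℂ _ _ g f

/-!
Reindex `x` and `y` along `(k, n) ↦ p n - k`. Then, block by block in `n`, the family `z` is
obtained from `x` by the matrix `A r c = (-1)^r C(c, r)` and `w` from `y` by `Aᵀ`. Binomial
inversion says `A * A = 1`. An invertible matrix acting on the blocks of a Hilbert basis is a
bounded invertible operator, so `z` and `w` are Riesz bases. Since `A * A = 1` and `x`, `y` are
biorthogonal, `z` and `w` are biorthogonal too. Biorthogonal Riesz bases are automatically dual,
in either order.
-/

open scoped Matrix

namespace HilbertBasis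

section Reindex

variable {ι ι' 𝕜 E F : Type*} [RCLike 𝕜] [NormedAddCommGroup E] [InnerProductSpace 𝕜 E]

protected def reindex [CompleteSpace E] (b : HilbertBasis ι 𝕜 E) (σ : ι ≃ ι') :
    HilbertBasis ι' 𝕜 E :=
  HilbertBasis.mk (b.orthonormal.comp _ σ.symm.injective) <| by
    rw [σ.symm.surjective.range_comp, b.dense_span]

@[simp]
theorem reindex_apply [CompleteSpace E] (b : HilbertBasis ι 𝕜 E) (σ : ι ≃ ι') (i : ι') :
    b.reindex σ i = b (σ.symm i) := by
  simp [HilbertBasis.reindex]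

theorem ext_continuousLinearMap [NormedAddCommGroup F] [NormedSpace 𝕜 F]
    (b : HilbertBasis ι 𝕜 E) {f g : E →L[𝕜] F} (h : ∀ i, f (b i) = g (b i)) : f = g :=
  ContinuousLinearMap.ext_on (Submodule.dense_iff_topologicalClosure_eq_top.mpr b.dense_span)
    (by rintro _ ⟨i, rfl⟩; exact h i)

def coordProj (b : HilbertBasis ι 𝕜 E) (s : Set ι) : E →L[𝕜] E :=
  (b.repr.symm.toContinuousLinearEquiv : lp (fun _ : ι => 𝕜) 2 →L[𝕜] E) ∘L
    lp.mapCLM 2 (fun i => if i ∈ s then ContinuousLinearMap.id 𝕜 𝕜 else 0) zero_le_one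
      (fun i => by split_ifs <;> simp) ∘L
    (b.repr.toContinuousLinearEquiv : E →L[𝕜] lp (fun _ : ι => 𝕜) 2)

theorem coordProj_apply_self (b : HilbertBasis ι 𝕜 E) (s : Set ι) (i : ι) :
    b.coordProj s (b i) = if i ∈ s then b i else 0 := by
  apply b.repr.injective
  ext j
  by_cases hi : i ∈ s <;> by_cases hj : j = i <;>
    simp [coordProj, b.repr_self, lp.single_apply, hi, hj]

end Reindex

section BlockOp

variable {m κ 𝕜 E : Type*} [RCLike 𝕜] [NormedAddCommGroup E] [InnerProductSpace 𝕜 E]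
  [CompleteSpace E] (e : HilbertBasis (m × κ) 𝕜 E)

def matrixUnitOp (k j : m) : E →L[𝕜] E :=
  ((e.repr.trans (e.reindex ((Equiv.swap k j).prodCongr (Equiv.refl κ))).repr.symm :
    E ≃ₗᵢ[𝕜] E) : E →L[𝕜] E) ∘L e.coordProj {i | i.1 = j}

theorem matrixUnitOp_apply_self (k j j' : m) (n : κ) :
    e.matrixUnitOp k j (e (j', n)) = if j' = j then e (k, n) else 0 := by
  classical
  by_cases h : j' = j
  · subst h
    simp [matrixUnitOp, coordProj_apply_self, e.repr_self, HilbertBasis.repr_symm_single]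
  · simp [matrixUnitOp, coordProj_apply_self, h]

variable [Fintype m] [DecidableEq m]

def blockOp (A : Matrix m m 𝕜) : E →L[𝕜] E := ∑ k, ∑ j, A k j • e.matrixUnitOp k j

theorem blockOp_apply_self (A : Matrix m m 𝕜) (j : m) (n : κ) :
    e.blockOp A (e (j, n)) = ∑ k, A k j • e (k, n) := by
  simp [blockOp, matrixUnitOp_apply_self]

theorem blockOp_mul (A B : Matrix m m 𝕜) : e.blockOp (A * B) = e.blockOp A * e.blockOp B := by
  refine e.ext_continuousLinearMap fun ⟨j, n⟩ => ?_
  simp only [mul_apply_eq_comp, blockOp_apply_self, map_sum, map_smul, Finset.smul_sum,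
    smul_smul, Matrix.mul_apply, Finset.sum_smul]
  exact Finset.sum_comm.trans (by simp_rw [mul_comm])

theorem blockOp_one : e.blockOp 1 = 1 := by
  refine e.ext_continuousLinearMap fun ⟨j, n⟩ => ?_
  simp [blockOp_apply_self, Matrix.one_apply]

theorem isUnit_blockOp {A : Matrix m m 𝕜} (hA : IsUnit A) : IsUnit (e.blockOp A) :=
  hA.map (⟨⟨e.blockOp, e.blockOp_one⟩, e.blockOp_mul⟩ : Matrix m m 𝕜 →* (E →L[𝕜] E))

end BlockOp

end HilbertBasis

section RieszBasis

variable {H : Type*} [NormedAddCommGroup H] [InnerProductSpace ℂ H] [CompleteSpace H]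
  {ι ι' : Type*}

theorem IsRieszBasis.comp_equiv {x : ι → H} (hx : IsRieszBasis x) (σ : ι' ≃ ι) :
    IsRieszBasis (x ∘ σ) := by
  obtain ⟨e, T, hT⟩ := hx
  exact ⟨e.reindex σ.symm, T, fun i => by simp [hT]⟩

theorem IsRieszBasis.hasSum_of_biorthogonal [DecidableEq ι] {x y : ι → H}
    (hx : IsRieszBasis x) (hy : IsRieszBasis y)
    (hxy : ∀ i j, ⟪x i, y j⟫ = if i = j then (1 : ℂ) else 0) (f : H) :
    HasSum (fun i => ⟪f, y i⟫ • x i) f := by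
  obtain ⟨e, T, hT⟩ := hx
  obtain ⟨b, S, hS⟩ := hy
  -- `f ↦ ∑ ⟪f, y i⟫ • x i` is the bounded operator `L`; it fixes every `x j` by
  -- biorthogonality, so it is the identity.
  set L : H →L[ℂ] H := (T : H →L[ℂ] H) ∘L e.repr.symm.toContinuousLinearEquiv.toContinuousLinearMap
    ∘L b.repr.toContinuousLinearEquiv.toContinuousLinearMap ∘L (S : H →L[ℂ] H).adjoint
  have hL : ∀ f, HasSum (fun i => ⟪f, y i⟫ • x i) (L f) := fun f => by
    convert (e.hasSum_repr_symm (b.repr ((S : H →L[ℂ] H).adjoint f))).mapL (T : H →L[ℂ] H)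
      using 1
    · ext i
      simp [hS, hT, b.repr_apply_apply, ContinuousLinearMap.adjoint_inner_right]
    · rfl
  have hLx : ∀ j, L (x j) = x j := fun j => by
    refine (hL (x j)).unique ?_
    convert hasSum_ite_eq j (x j) using 2 with i
    rw [hxy]
    by_cases h : i = j <;> simp [h, Ne.symm]
  have hLT : L ∘L (T : H →L[ℂ] H) = T := e.ext_continuousLinearMap fun j => by simp [← hT, hLx]
  have hLf : L f = f := by simpa using DFunLike.congr_fun hLT (T.symm f)
  simpa only [hLf] using hL f

theorem IsDualRieszBasisPair.of_biorthogonal [DecidableEq ι] {x y : ι → H}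
    (hx : IsRieszBasis x) (hy : IsRieszBasis y)
    (hxy : ∀ i j, ⟪x i, y j⟫ = if i = j then (1 : ℂ) else 0) :
    IsDualRieszBasisPair x y :=
  ⟨hx, hy, fun i j => by rw [hxy]; split_ifs <;> rfl, hx.hasSum_of_biorthogonal hy hxy⟩

theorem IsDualRieszBasisPair.symm {x y : ι → H} (h : IsDualRieszBasisPair x y) :
    IsDualRieszBasisPair y x :=
  .of_biorthogonal h.2.1 h.1 fun i j => by
    rw [← inner_conj_symm, h.2.2.1 j i]
    split_ifs <;> simp_all

end RieszBasis

section BlockMix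

variable {m κ : Type*} [Fintype m] [DecidableEq m]
  {H : Type*} [NormedAddCommGroup H] [InnerProductSpace ℂ H]

def blockMix (A : Matrix m m ℂ) (v : m × κ → H) : m × κ → H :=
  fun i => ∑ r, A r i.1 • v (r, i.2)

theorem IsRieszBasis.blockMix [CompleteSpace H] {v : m × κ → H} (hv : IsRieszBasis v)
    {A : Matrix m m ℂ} (hA : IsUnit A) : IsRieszBasis (blockMix A v) := by
  obtain ⟨e, T, hT⟩ := hv
  obtain ⟨U, hU⟩ := e.isUnit_blockOp hA
  refine ⟨e, (ContinuousLinearEquiv.unitsEquiv ℂ H U).trans T, fun ⟨k, n⟩ => ?_⟩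
  simp [_root_.blockMix, hU, HilbertBasis.blockOp_apply_self, hT]

theorem blockMix_biorthogonal [DecidableEq κ] {v u : m × κ → H}
    (hvu : ∀ i j, ⟪v i, u j⟫ = if i = j then (1 : ℂ) else 0) {A B : Matrix m m ℂ}
    (hBA : Bᴴ * A = 1) (i j : m × κ) :
    ⟪blockMix A v i, blockMix B u j⟫ = if i = j then (1 : ℂ) else 0 := by
  obtain ⟨k, n⟩ := i
  obtain ⟨k', n'⟩ := j
  simp only [blockMix, sum_inner, inner_sum, inner_smul_left, inner_smul_right, hvu]
  have hkk' := congr_fun₂ hBA k' k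
  simp only [Matrix.mul_apply, Matrix.conjTranspose_apply, Matrix.one_apply,
    RCLike.star_def] at hkk'
  by_cases hn : n = n'
  · subst hn
    simp only [Prod.mk.injEq, and_true, mul_ite, mul_one, mul_zero, Finset.sum_ite_eq,
      Finset.mem_univ, if_true]
    rw [Finset.sum_congr rfl fun r _ => mul_comm (A r k) _, hkk']
    exact if_congr eq_comm rfl rfl
  · simp [hn]

end BlockMix

theorem Int.alternating_sum_choose_mul_choose (c r : ℕ) :
    ∑ j ∈ Finset.range (c + 1), (-1) ^ j * (c.choose j * j.choose r : ℤ) =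
      if r = c then (-1) ^ r else 0 := by
  rcases lt_or_ge c r with hcr | hrc
  · rw [if_neg hcr.ne', Finset.sum_eq_zero]
    intro j hj
    rw [Nat.choose_eq_zero_of_lt (n := j) (k := r) (by simp at hj; omega)]
    simp
  obtain ⟨d, rfl⟩ := Nat.exists_eq_add_of_le hrc
  rw [show r + d + 1 = r + (d + 1) by ring, Finset.sum_range_add]
  have hlow : ∀ j ∈ Finset.range r, (-1) ^ j * ((r + d).choose j * j.choose r : ℤ) = 0 :=
    fun j hj => by rw [Nat.choose_eq_zero_of_lt (Finset.mem_range.mp hj)]; simp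
  have hhigh : ∀ t, (-1) ^ (r + t) * ((r + d).choose (r + t) * (r + t).choose r : ℤ) =
      (-1) ^ r * (r + d).choose r * ((-1) ^ t * d.choose t) := fun t => by
    have := Nat.choose_mul (n := r + d) (k := r + t) (s := r) (Nat.le_add_right r t)
    simp only [Nat.add_sub_cancel_left] at this
    rw [← Nat.cast_mul, this, pow_add]
    push_cast
    ring
  rw [Finset.sum_eq_zero hlow, Finset.sum_congr rfl fun t _ => hhigh t, ← Finset.mul_sum,
    Int.alternating_sum_range_choose]
  rcases eq_or_ne d 0 with rfl | hd
  · simp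
  · simp [hd]

def signedPascal (R : Type*) [CommRing R] (p : ℕ) : Matrix (Fin p) (Fin p) R :=
  Matrix.of fun r c => (-1) ^ (r : ℕ) * ((c : ℕ).choose r : R)

theorem signedPascal_mul_self (R : Type*) [CommRing R] (p : ℕ) :
    signedPascal R p * signedPascal R p = 1 := by
  ext r c
  have hsupp : Finset.range ((c : ℕ) + 1) ⊆ Finset.range p :=
    Finset.range_subset_range.mpr c.isLt
  calc (signedPascal R p * signedPascal R p) r c
      = (-1) ^ (r : ℕ) * ∑ j ∈ Finset.range p,
          (-1) ^ j * (((c : ℕ).choose j * j.choose r : ℤ) : R) := by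
        rw [← Fin.sum_univ_eq_sum_range, Finset.mul_sum]
        simp only [Matrix.mul_apply, signedPascal, Matrix.of_apply]
        push_cast
        exact Finset.sum_congr rfl fun j _ => by ring
    _ = (-1) ^ (r : ℕ) * ∑ j ∈ Finset.range ((c : ℕ) + 1),
          (-1) ^ j * (((c : ℕ).choose j * j.choose r : ℤ) : R) := by
        rw [Finset.sum_subset hsupp fun j _ hj => ?_]
        rw [Nat.choose_eq_zero_of_lt (n := c) (k := j) (by simpa using hj)]
        simp
    _ = (-1) ^ (r : ℕ) * ((if (r : ℕ) = c then (-1) ^ (r : ℕ) else 0 : ℤ) : R) := by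
        rw [← Int.alternating_sum_choose_mul_choose]
        push_cast
        rfl
    _ = (1 : Matrix (Fin p) (Fin p) R) r c := by
        simp only [Matrix.one_apply, Fin.val_eq_val]
        split_ifs <;> simp [← mul_pow]

def finProdIntEquiv (p : ℕ) [NeZero p] : Fin p × ℤ ≃ ℤ :=
  ((Equiv.prodComm _ _).trans ((Equiv.neg ℤ).prodCongr (Equiv.refl _))).trans
    ((Int.divModEquiv p).symm.trans (Equiv.neg ℤ))

@[simp]
theorem finProdIntEquiv_apply (p : ℕ) [NeZero p] (k : Fin p) (n : ℤ) :
    finProdIntEquiv p (k, n) = p * n - k := by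
  simp [finProdIntEquiv]
  ring

section BackwardDifferences

variable {H : Type*} [NormedAddCommGroup H] [InnerProductSpace ℂ H] {p : ℕ} [NeZero p]

theorem backwardDiff_eq_blockMix (x : ℤ → H) (k : Fin p) (n : ℤ) :
    ∑ j ∈ Finset.range ((k : ℕ) + 1), ((-1 : ℂ) ^ j * (Nat.choose k j : ℂ)) • x (p * n - j) =
      blockMix (signedPascal ℂ p) (x ∘ finProdIntEquiv p) (k, n) := by
  simp only [blockMix, signedPascal, Matrix.of_apply, Function.comp_apply,
    finProdIntEquiv_apply]
  rw [Fin.sum_univ_eq_sum_range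
    (fun j => ((-1 : ℂ) ^ j * (Nat.choose k j : ℂ)) • x (p * n - j))]
  refine Finset.sum_subset (Finset.range_subset_range.mpr k.isLt) fun j _ hj => ?_
  rw [Nat.choose_eq_zero_of_lt (by simpa using hj)]
  simp

theorem dualBackwardDiff_eq_blockMix (y : ℤ → H) (k : Fin p) (n : ℤ) :
    (-1 : ℂ) ^ (k : ℕ) • ∑ j ∈ Finset.Icc (k : ℕ) (p - 1), (Nat.choose j k : ℂ) • y (p * n - j) =
      blockMix (signedPascal ℂ p)ᵀ (y ∘ finProdIntEquiv p) (k, n) := by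
  simp only [blockMix, Matrix.transpose_apply, signedPascal, Matrix.of_apply, Function.comp_apply,
    finProdIntEquiv_apply, Finset.smul_sum, smul_smul]
  rw [Fin.sum_univ_eq_sum_range
    (fun j => ((-1 : ℂ) ^ (k : ℕ) * (Nat.choose j k : ℂ)) • y (p * n - j))]
  refine Finset.sum_subset (fun j hj => ?_) fun j hj hjk => ?_
  · simp at hj ⊢
    omega
  · rw [Nat.choose_eq_zero_of_lt (by simp at hj hjk; omega)]
    simp

end BackwardDifferences

theorem stmt13_general {H : Type*} [NormedAddCommGroup H] [InnerProductSpace ℂ H]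
    [CompleteSpace H]
    {p : ℕ} (hp : 1 ≤ p) (x y : ℤ → H) (hxy : IsDualRieszBasisPair x y)
    (z w : Fin p × ℤ → H)
    (hz : ∀ (k : Fin p) (n : ℤ), z (k, n) =
      ∑ j ∈ Finset.range ((k : ℕ) + 1),
        ((-1 : ℂ) ^ j * (Nat.choose k j : ℂ)) • x ((p : ℤ) * n - (j : ℤ)))
    (hw : ∀ (k : Fin p) (n : ℤ), w (k, n) =
      (-1 : ℂ) ^ (k : ℕ) • ∑ j ∈ Finset.Icc (k : ℕ) (p - 1),
        (Nat.choose j k : ℂ) • y ((p : ℤ) * n - (j : ℤ))) :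
    IsDualRieszBasisPair z w ∧
      ∀ F : H, HasSum (fun i : Fin p × ℤ => ⟪F, z i⟫ • w i) F := by
  have : NeZero p := ⟨by omega⟩
  obtain ⟨hx, hy, hxy, -⟩ := hxy
  have hA : IsUnit (signedPascal ℂ p) := .of_mul_eq_one_right _ (signedPascal_mul_self ℂ p)
  have hz' : z = blockMix (signedPascal ℂ p) (x ∘ finProdIntEquiv p) :=
    funext fun ⟨k, n⟩ => (hz k n).trans (backwardDiff_eq_blockMix x k n)
  have hw' : w = blockMix (signedPascal ℂ p)ᵀ (y ∘ finProdIntEquiv p) :=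
    funext fun ⟨k, n⟩ => (hw k n).trans (dualBackwardDiff_eq_blockMix y k n)
  have hreal : (signedPascal ℂ p)ᵀᴴ = signedPascal ℂ p := by ext; simp [signedPascal]
  have hzw : IsDualRieszBasisPair z w := by
    rw [hz', hw']
    refine .of_biorthogonal ((hx.comp_equiv _).blockMix hA)
      ((hy.comp_equiv _).blockMix (Matrix.isUnit_transpose _ |>.mpr hA))
      (blockMix_biorthogonal (fun i j => by simp [hxy]) ?_)
    rw [hreal, signedPascal_mul_self]
  exact ⟨hzw, hzw.symm.2.2.2⟩

theorem stmt13 {H : Type*} [NormedAddCommGroup H] [InnerProductSpace ℂ H]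
    [CompleteSpace H] [TopologicalSpace.SeparableSpace H]
    {p : ℕ} (hp : 1 ≤ p) (x y : ℤ → H) (hxy : IsDualRieszBasisPair x y)
    (z w : Fin p × ℤ → H)
    (hz : ∀ (k : Fin p) (n : ℤ), z (k, n) =
      ∑ j ∈ Finset.range ((k : ℕ) + 1),
        ((-1 : ℂ) ^ j * (Nat.choose k j : ℂ)) • x ((p : ℤ) * n - (j : ℤ)))
    (hw : ∀ (k : Fin p) (n : ℤ), w (k, n) =
      (-1 : ℂ) ^ (k : ℕ) • ∑ j ∈ Finset.Icc (k : ℕ) (p - 1),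
        (Nat.choose j k : ℂ) • y ((p : ℤ) * n - (j : ℤ))) :
    IsDualRieszBasisPair z w ∧
      ∀ F : H, HasSum (fun i : Fin p × ℤ => ⟪F, z i⟫ • w i) F :=
  stmt13_general hp x y hxy z w hz hw
end
end
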